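/- arXiv:2312.12093 — 2 statements merged into one kernel-verified Lean document; each statement's English description precedes it below -/
import Mathlib

section
/- Let T, S be bounded operators on a complex Hilbert space H and n ≥ 2. The numerical radius of the n×n block matrix with T on the diagonal and S in every off-diagonal position equals max{w(T + (n−1)S), w(T − S)}. -/
noncomputable def numRadius {E : Type*} [NormedAddCommGroup E] [InnerProductSpace ℂ E]
    (T : E →L[ℂ] E) : ℝ :=
  sSup {r : ℝ | ∃ x : E, ‖x‖ = 1 ∧ r = ‖(inner ℂ (T x) x : ℂ)‖}

noncomputable def blockOp {H : Type*} [NormedAddCommGroup H] [InnerProductSpace ℂ H]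
    (n : ℕ) (M : Fin n → Fin n → H →L[ℂ] H) :
    (PiLp 2 fun _ : Fin n => H) →L[ℂ] (PiLp 2 fun _ : Fin n => H) :=
  (PiLp.continuousLinearEquiv 2 ℂ (fun _ : Fin n => H)).symm.toContinuousLinearMap ∘L
    (ContinuousLinearMap.pi fun i => ∑ j, (M i j).comp (ContinuousLinearMap.proj j)) ∘L
    (PiLp.continuousLinearEquiv 2 ℂ (fun _ : Fin n => H)).toContinuousLinearMap

/-! Write `x ∈ Hⁿ` as `xᵢ = vᵢ + y` with `y` the mean of the `xᵢ`, so that `∑ vᵢ = 0`. The block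
operator acts as `T - S` on each coordinate plus `S` applied to `∑ xⱼ`, hence
`⟪Mx, x⟫ = ∑ ⟪(T - S)vᵢ, vᵢ⟫ + n ⟪(T + (n - 1)S)y, y⟫` while `‖x‖² = ∑ ‖vᵢ‖² + n ‖y‖²`, which bounds
`w(M)` by the maximum. Conversely, `(z, …, z)` and `(z, -z, 0, …, 0)` recover `⟪(T + (n - 1)S)z, z⟫`
and `⟪(T - S)z, z⟫`, scaled by the same factor `n`, resp. `2`, as `‖z‖²`. -/

open scoped InnerProductSpace

section NumRadius

variable {E F : Type*} [NormedAddCommGroup E] [InnerProductSpace ℂ E]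
  [NormedAddCommGroup F] [InnerProductSpace ℂ F]

lemma numRadius_nonneg (T : E →L[ℂ] E) : 0 ≤ numRadius T :=
  Real.sSup_nonneg fun _ ⟨_, _, hr⟩ => hr ▸ norm_nonneg _

lemma norm_inner_le_numRadius_mul_sq (T : E →L[ℂ] E) (x : E) :
    ‖⟪T x, x⟫_ℂ‖ ≤ numRadius T * ‖x‖ ^ 2 := by
  have hbdd : BddAbove {r : ℝ | ∃ x : E, ‖x‖ = 1 ∧ r = ‖⟪T x, x⟫_ℂ‖} := by
    refine ⟨‖T‖, ?_⟩
    rintro r ⟨x, hx, rfl⟩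
    calc ‖⟪T x, x⟫_ℂ‖ ≤ ‖T x‖ * ‖x‖ := norm_inner_le_norm _ _
      _ ≤ ‖T‖ * ‖x‖ * ‖x‖ := by gcongr; exact T.le_opNorm x
      _ = ‖T‖ := by rw [hx, mul_one, mul_one]
  rcases eq_or_ne x 0 with rfl | hx
  · simp
  have hr : 0 < ‖x‖ := norm_pos_iff.mpr hx
  have hu : ‖(‖x‖ : ℂ)⁻¹ • x‖ = 1 := by
    rw [norm_smul, norm_inv, Complex.norm_real, norm_norm, inv_mul_cancel₀ hr.ne']
  have := le_csSup hbdd ⟨_, hu, rfl⟩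
  rw [map_smul, inner_smul_left, inner_smul_right, norm_mul, norm_mul, RCLike.norm_conj, norm_inv,
    Complex.norm_real, norm_norm, ← mul_assoc, ← sq, inv_pow, inv_mul_le_iff₀ (by positivity),
    mul_comm] at this
  exact this

lemma numRadius_le_of_forall_norm_inner_le (T : E →L[ℂ] E) {c : ℝ} (hc : 0 ≤ c)
    (h : ∀ x, ‖x‖ = 1 → ‖⟪T x, x⟫_ℂ‖ ≤ c) : numRadius T ≤ c :=
  Real.sSup_le (fun _ ⟨x, hx, hr⟩ => hr ▸ h x hx) hc

lemma numRadius_le_of_inner_map_eq (A : E →L[ℂ] E) (M : F →L[ℂ] F) (φ : E → F) {c : ℝ}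
    (hc : 0 < c) (hinner : ∀ z, ⟪M (φ z), φ z⟫_ℂ = c * ⟪A z, z⟫_ℂ)
    (hnorm : ∀ z, ‖φ z‖ ^ 2 = c * ‖z‖ ^ 2) : numRadius A ≤ numRadius M := by
  refine numRadius_le_of_forall_norm_inner_le A (numRadius_nonneg M) fun z hz => ?_
  have := norm_inner_le_numRadius_mul_sq M (φ z)
  rw [hinner, hnorm, hz, norm_mul, Complex.norm_real, Real.norm_of_nonneg hc.le] at this
  nlinarith

end NumRadius

section MeanDecomposition

variable {ι E : Type*} [Fintype ι] [NormedAddCommGroup E] [InnerProductSpace ℂ E]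

lemma exists_sum_eq_zero_add_const [Nonempty ι] (x : ι → E) :
    ∃ (v : ι → E) (y : E), ∑ i, v i = 0 ∧ x = fun i => v i + y := by
  have hcard : (Fintype.card ι : ℂ) ≠ 0 := by simp
  refine ⟨fun i => x i - (Fintype.card ι : ℂ)⁻¹ • ∑ j, x j, (Fintype.card ι : ℂ)⁻¹ • ∑ j, x j,
    ?_, by simp⟩
  rw [Finset.sum_sub_distrib, Finset.sum_const, Finset.card_univ, ← Nat.cast_smul_eq_nsmul ℂ,
    smul_smul, mul_inv_cancel₀ hcard, one_smul, sub_self]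

lemma sum_inner_map_add_of_sum_eq_zero (C : E →L[ℂ] E) {v : ι → E} (hv : ∑ i, v i = 0)
    (y : E) :
    ∑ i, ⟪C (v i + y), v i + y⟫_ℂ = ∑ i, ⟪C (v i), v i⟫_ℂ + Fintype.card ι * ⟪C y, y⟫_ℂ := by
  simp only [map_add, inner_add_left, inner_add_right, Finset.sum_add_distrib, ← sum_inner,
    ← inner_sum, ← map_sum, hv, map_zero, inner_zero_left, inner_zero_right, add_zero, zero_add,
    Finset.sum_const, Finset.card_univ]
  rw [map_nsmul, ← Nat.cast_smul_eq_nsmul ℂ, inner_smul_left, Complex.conj_natCast]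

lemma norm_toLp_add_const_sq {v : ι → E} (hv : ∑ i, v i = 0) (y : E) :
    ‖WithLp.toLp 2 (fun i => v i + y)‖ ^ 2 = ∑ i, ‖v i‖ ^ 2 + Fintype.card ι * ‖y‖ ^ 2 := by
  simp only [PiLp.norm_sq_eq_of_L2, norm_add_sq (𝕜 := ℂ), Finset.sum_add_distrib,
    ← Finset.mul_sum, ← map_sum, ← sum_inner, hv, inner_zero_left, map_zero, mul_zero, add_zero,
    Finset.sum_const, Finset.card_univ, nsmul_eq_mul]

end MeanDecomposition

section BlockOp

variable {H : Type*} [NormedAddCommGroup H] [InnerProductSpace ℂ H] {n : ℕ} (T S : H →L[ℂ] H)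

lemma blockOp_ite_apply (x : PiLp 2 fun _ : Fin n => H) (i : Fin n) :
    blockOp n (fun i j => if i = j then T else S) x i = (T - S) (x i) + S (∑ j, x j) := by
  simp only [blockOp, ContinuousLinearMap.comp_apply, ContinuousLinearEquiv.coe_coe,
    ContinuousLinearMap.coe_pi', sum_apply, ContinuousLinearMap.proj_apply,
    PiLp.continuousLinearEquiv_apply, PiLp.continuousLinearEquiv_symm_apply, map_sum]
  have hsplit (j : Fin n) :
      (if i = j then T else S) (x j) = S (x j) + if i = j then (T - S) (x j) else 0 := by
    split_ifs <;> simp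
  rw [Finset.sum_congr rfl fun j _ => hsplit j, Finset.sum_add_distrib, Finset.sum_ite_eq,
    if_pos (Finset.mem_univ i), add_comm]

lemma inner_blockOp_ite_self (x : PiLp 2 fun _ : Fin n => H) :
    ⟪blockOp n (fun i j => if i = j then T else S) x, x⟫_ℂ =
      ∑ i, ⟪(T - S) (x i), x i⟫_ℂ + ⟪S (∑ i, x i), ∑ i, x i⟫_ℂ := by
  simp only [PiLp.inner_apply, blockOp_ite_apply, inner_add_left, Finset.sum_add_distrib,
    ← inner_sum]

lemma inner_blockOp_ite_toLp_add_const {v : Fin n → H} (hv : ∑ i, v i = 0) (y : H) :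
    ⟪blockOp n (fun i j => if i = j then T else S) (WithLp.toLp 2 fun i => v i + y),
        WithLp.toLp 2 fun i => v i + y⟫_ℂ =
      ∑ i, ⟪(T - S) (v i), v i⟫_ℂ + n * ⟪(T - S + n • S) y, y⟫_ℂ := by
  rw [inner_blockOp_ite_self, sum_inner_map_add_of_sum_eq_zero _ hv, Finset.sum_add_distrib, hv,
    zero_add, Finset.sum_const, Finset.card_univ, Fintype.card_fin]
  simp only [add_apply, smul_apply, map_smul, ← Nat.cast_smul_eq_nsmul ℂ, inner_smul_left,
    inner_smul_right, inner_add_left, Complex.conj_natCast]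
  ring

lemma numRadius_blockOp_ite_le (hn : n ≠ 0) :
    numRadius (blockOp n (fun i j => if i = j then T else S)) ≤
      max (numRadius (T - S + n • S)) (numRadius (T - S)) := by
  have : Nonempty (Fin n) := ⟨⟨0, Nat.pos_of_ne_zero hn⟩⟩
  refine numRadius_le_of_forall_norm_inner_le _ (le_max_of_le_left (numRadius_nonneg _))
    fun x hx => ?_
  obtain ⟨v, y, hv, hvy⟩ := exists_sum_eq_zero_add_const x.ofLp
  obtain rfl : x = WithLp.toLp 2 fun i => v i + y := by rw [← hvy, WithLp.toLp_ofLp]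
  have hx2 := norm_toLp_add_const_sq hv y
  rw [hx, one_pow, Fintype.card_fin] at hx2
  rw [inner_blockOp_ite_toLp_add_const T S hv]
  set K := max (numRadius (T - S + n • S)) (numRadius (T - S))
  calc ‖∑ i, ⟪(T - S) (v i), v i⟫_ℂ + n * ⟪(T - S + n • S) y, y⟫_ℂ‖
      ≤ ∑ i, ‖⟪(T - S) (v i), v i⟫_ℂ‖ + n * ‖⟪(T - S + n • S) y, y⟫_ℂ‖ := by
        refine (norm_add_le _ _).trans (add_le_add (norm_sum_le _ _) ?_)
        rw [norm_mul, Complex.norm_natCast]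
    _ ≤ ∑ i, K * ‖v i‖ ^ 2 + n * (K * ‖y‖ ^ 2) := by
        gcongr with i
        · exact (norm_inner_le_numRadius_mul_sq _ _).trans
            (by gcongr; exact le_max_right _ _)
        · exact (norm_inner_le_numRadius_mul_sq _ _).trans
            (by gcongr; exact le_max_left _ _)
    _ = K := by rw [← Finset.mul_sum]; linear_combination -K * hx2

lemma numRadius_sub_add_nsmul_le_numRadius_blockOp_ite (hn : n ≠ 0) :
    numRadius (T - S + n • S) ≤ numRadius (blockOp n (fun i j => if i = j then T else S)) := by
  have hv : ∑ i : Fin n, (0 : Fin n → H) i = 0 := by simp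
  refine numRadius_le_of_inner_map_eq _ _ (fun z => WithLp.toLp 2 fun i => (0 : Fin n → H) i + z)
    (Nat.cast_pos.mpr (Nat.pos_of_ne_zero hn)) (fun z => ?_) (fun z => ?_)
  · simpa using inner_blockOp_ite_toLp_add_const T S hv z
  · simpa using norm_toLp_add_const_sq hv z

lemma numRadius_sub_le_numRadius_blockOp_ite {i j : Fin n} (hij : i ≠ j) :
    numRadius (T - S) ≤ numRadius (blockOp n (fun i j => if i = j then T else S)) := by
  let v (z : H) : Fin n → H := Pi.single i z - Pi.single j z
  have hv (z : H) : ∑ k, v z k = 0 := by simp [v, Finset.sum_sub_distrib]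
  have hv_eq_zero (z : H) (k : Fin n) (hk : k ≠ i ∧ k ≠ j) : v z k = 0 := by simp [v, hk.1, hk.2]
  refine numRadius_le_of_inner_map_eq _ _ (fun z => WithLp.toLp 2 fun k => v z k + 0) two_pos
    (fun z => ?_) (fun z => ?_)
  · rw [inner_blockOp_ite_toLp_add_const T S (hv z),
      Fintype.sum_eq_add i j hij fun k hk => by simp [hv_eq_zero z k hk]]
    simp only [v, Pi.sub_apply, Pi.single_eq_same, Pi.single_eq_of_ne hij,
      Pi.single_eq_of_ne hij.symm, sub_zero, zero_sub, map_neg, inner_neg_neg, inner_zero_right,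
      mul_zero, add_zero]
    push_cast
    ring
  · rw [norm_toLp_add_const_sq (hv z),
      Fintype.sum_eq_add i j hij fun k hk => by simp [hv_eq_zero z k hk]]
    simp only [v, Pi.sub_apply, Pi.single_eq_same, Pi.single_eq_of_ne hij,
      Pi.single_eq_of_ne hij.symm, sub_zero, zero_sub, norm_neg, norm_zero]
    ring

end BlockOp

variable {H : Type*} [NormedAddCommGroup H] [InnerProductSpace ℂ H]
theorem stmt12 (T S : H →L[ℂ] H) (n : ℕ) (hn : 2 ≤ n) :
    numRadius (blockOp n (fun i j => if i = j then T else S)) =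
      max (numRadius (T + (n - 1 : ℕ) • S)) (numRadius (T - S)) := by
  have hn0 : n ≠ 0 := by omega
  have hA : T + (n - 1 : ℕ) • S = T - S + n • S := by
    obtain ⟨m, rfl⟩ := Nat.exists_eq_add_one_of_ne_zero hn0
    rw [Nat.add_sub_cancel, succ_nsmul]
    abel
  rw [hA]
  exact le_antisymm (numRadius_blockOp_ite_le T S hn0)
    (max_le (numRadius_sub_add_nsmul_le_numRadius_blockOp_ite T S hn0)
      (numRadius_sub_le_numRadius_blockOp_ite T S (i := ⟨0, by omega⟩) (j := ⟨1, by omega⟩)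
        (by simp [Fin.ext_iff])))
end

section
/- For bounded operators T₁, T₂ on a complex Hilbert space H, the numerical radius of the 3×3 block operator [[O, T₁, O],[T₁, O, T₂],[O, T₂, O]] on H ⊕ H ⊕ H is at most √(w(T₁)² + w(T₂)²). -/
section NumRadius

variable {E : Type*} [NormedAddCommGroup E] [InnerProductSpace ℂ E]

lemma norm_inner_self_le_numRadius (T : E →L[ℂ] E) {x : E} (hx : ‖x‖ = 1) :
    ‖(inner ℂ (T x) x : ℂ)‖ ≤ numRadius T := by
  refine le_csSup ⟨‖T‖, ?_⟩ ⟨x, hx, rfl⟩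
  rintro _ ⟨y, hy, rfl⟩
  calc ‖(inner ℂ (T y) y : ℂ)‖ ≤ ‖T y‖ * ‖y‖ := norm_inner_le_norm _ _
    _ ≤ ‖T‖ * ‖y‖ * ‖y‖ := by gcongr; exact T.le_opNorm y
    _ = ‖T‖ := by rw [hy, mul_one, mul_one]

lemma norm_inner_self_le_numRadius_mul_sq (T : E →L[ℂ] E) (z : E) :
    ‖(inner ℂ (T z) z : ℂ)‖ ≤ numRadius T * ‖z‖ ^ 2 := by
  rcases eq_or_ne z 0 with rfl | hz
  · simp
  have hz' : 0 < ‖z‖ := norm_pos_iff.mpr hz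
  set x : E := (‖z‖⁻¹ : ℂ) • z
  have hx : ‖x‖ = 1 := by simp [x, norm_smul, hz'.ne']
  have hzx : ‖(inner ℂ (T x) x : ℂ)‖ = ‖(inner ℂ (T z) z : ℂ)‖ / ‖z‖ ^ 2 := by
    simp [x]
    ring
  have := norm_inner_self_le_numRadius T hx
  rwa [hzx, div_le_iff₀ (by positivity)] at this

-- `2 (⟪T u, v⟫ + ⟪T v, u⟫) = ⟪T (u + v), u + v⟫ - ⟪T (u - v), u - v⟫`, then the parallelogram law.
lemma norm_inner_add_inner_swap_le (T : E →L[ℂ] E) (u v : E) :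
    ‖(inner ℂ (T u) v + inner ℂ (T v) u : ℂ)‖ ≤ numRadius T * (‖u‖ ^ 2 + ‖v‖ ^ 2) := by
  have hpol : (2 : ℂ) * (inner ℂ (T u) v + inner ℂ (T v) u)
      = inner ℂ (T (u + v)) (u + v) - inner ℂ (T (u - v)) (u - v) := by
    simp only [map_add, map_sub, inner_add_left, inner_add_right, inner_sub_left,
      inner_sub_right]
    ring
  have hpar : ‖u + v‖ ^ 2 + ‖u - v‖ ^ 2 = 2 * (‖u‖ ^ 2 + ‖v‖ ^ 2) := by
    linarith [parallelogram_law_with_norm ℂ u v]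
  have : 2 * ‖(inner ℂ (T u) v + inner ℂ (T v) u : ℂ)‖
      ≤ numRadius T * ‖u + v‖ ^ 2 + numRadius T * ‖u - v‖ ^ 2 := by
    calc 2 * ‖(inner ℂ (T u) v + inner ℂ (T v) u : ℂ)‖
        = ‖inner ℂ (T (u + v)) (u + v) - inner ℂ (T (u - v)) (u - v)‖ := by
          rw [← hpol, norm_mul, Complex.norm_ofNat]
      _ ≤ _ := (norm_sub_le _ _).trans (add_le_add
          (norm_inner_self_le_numRadius_mul_sq T _) (norm_inner_self_le_numRadius_mul_sq T _))
  rw [← mul_add, hpar] at this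
  linarith

-- Apply the previous bound to `‖v‖ • u` and `‖u‖ • v`, whose norms agree.
lemma norm_inner_add_inner_swap_le_two_mul (T : E →L[ℂ] E) (u v : E) :
    ‖(inner ℂ (T u) v + inner ℂ (T v) u : ℂ)‖ ≤ 2 * numRadius T * (‖u‖ * ‖v‖) := by
  rcases eq_or_ne u 0 with rfl | hu
  · simp
  rcases eq_or_ne v 0 with rfl | hv
  · simp
  have huv : 0 < ‖u‖ * ‖v‖ := mul_pos (norm_pos_iff.mpr hu) (norm_pos_iff.mpr hv)
  have h := norm_inner_add_inner_swap_le T ((‖v‖ : ℂ) • u) ((‖u‖ : ℂ) • v)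
  have hscale : (inner ℂ (T ((‖v‖ : ℂ) • u)) ((‖u‖ : ℂ) • v)
      + inner ℂ (T ((‖u‖ : ℂ) • v)) ((‖v‖ : ℂ) • u) : ℂ)
      = ((‖u‖ * ‖v‖ : ℝ) : ℂ) * (inner ℂ (T u) v + inner ℂ (T v) u) := by
    simp only [map_smul, inner_smul_left, inner_smul_right, Complex.conj_ofReal]
    push_cast
    ring
  rw [hscale, norm_mul, Complex.norm_real, Real.norm_of_nonneg huv.le, norm_smul, norm_smul,
    Complex.norm_real, Complex.norm_real, Real.norm_of_nonneg (norm_nonneg _),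
    Real.norm_of_nonneg (norm_nonneg _)] at h
  refine le_of_mul_le_mul_left ?_ huv
  nlinarith

end NumRadius

-- With `s = √(p² + q²)`: `s (s (a² + b² + c²) - 2b (pa + qc)) = (sb - (pa + qc))² + (pc - qa)²`.
lemma two_mul_add_two_mul_le_sqrt_mul (p q a b c : ℝ) :
    2 * p * (b * a) + 2 * q * (b * c) ≤ √(p ^ 2 + q ^ 2) * (a ^ 2 + b ^ 2 + c ^ 2) := by
  set s := √(p ^ 2 + q ^ 2)
  have hs : s ^ 2 = p ^ 2 + q ^ 2 := Real.sq_sqrt (by positivity)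
  rcases (Real.sqrt_nonneg (p ^ 2 + q ^ 2)).eq_or_lt with hs0 | hs0
  · have hp : p = 0 := by nlinarith
    have hq : q = 0 := by nlinarith
    simp only [hp, hq, mul_zero, zero_mul, add_zero]
    exact mul_nonneg hs0.le (by positivity)
  · refine le_of_mul_le_mul_left ?_ hs0
    nlinarith [sq_nonneg (s * b - (p * a + q * c)), sq_nonneg (p * c - q * a)]

section BlockOp

variable {H : Type*} [NormedAddCommGroup H] [InnerProductSpace ℂ H]

lemma blockOp_apply {n : ℕ} (M : Matrix (Fin n) (Fin n) (H →L[ℂ] H))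
    (x : PiLp 2 fun _ : Fin n => H) (i : Fin n) : blockOp n M x i = ∑ j, M i j (x j) := by
  simp [blockOp]

lemma inner_blockOp {n : ℕ} (M : Matrix (Fin n) (Fin n) (H →L[ℂ] H))
    (x : PiLp 2 fun _ : Fin n => H) :
    inner ℂ (blockOp n M x) x = ∑ i, ∑ j, (inner ℂ (M i j (x j)) (x i) : ℂ) := by
  simp only [PiLp.inner_apply, blockOp_apply, sum_inner]

end BlockOp

variable {H : Type*} [NormedAddCommGroup H] [InnerProductSpace ℂ H]
theorem stmt15 (T₁ T₂ : H →L[ℂ] H) :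
    numRadius (blockOp 3 !![0, T₁, 0; T₁, 0, T₂; 0, T₂, 0]) ≤
      Real.sqrt (numRadius T₁ ^ 2 + numRadius T₂ ^ 2) := by
  refine Real.sSup_le ?_ (Real.sqrt_nonneg _)
  rintro _ ⟨x, hx, rfl⟩
  have hinner : (inner ℂ (blockOp 3 !![0, T₁, 0; T₁, 0, T₂; 0, T₂, 0] x) x : ℂ)
      = (inner ℂ (T₁ (x 1)) (x 0) + inner ℂ (T₁ (x 0)) (x 1))
        + (inner ℂ (T₂ (x 1)) (x 2) + inner ℂ (T₂ (x 2)) (x 1)) := by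
    rw [inner_blockOp]
    simp [Fin.sum_univ_three]
    ring
  have hnorm : ‖x 0‖ ^ 2 + ‖x 1‖ ^ 2 + ‖x 2‖ ^ 2 = 1 := by
    rw [← Fin.sum_univ_three (fun i => ‖x i‖ ^ 2), ← PiLp.norm_sq_eq_of_L2, hx, one_pow]
  rw [hinner]
  calc _ ≤ _ := norm_add_le _ _
    _ ≤ 2 * numRadius T₁ * (‖x 1‖ * ‖x 0‖) + 2 * numRadius T₂ * (‖x 1‖ * ‖x 2‖) :=
        add_le_add (norm_inner_add_inner_swap_le_two_mul T₁ _ _)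
          (norm_inner_add_inner_swap_le_two_mul T₂ _ _)
    _ ≤ _ := by
        simpa [hnorm] using two_mul_add_two_mul_le_sqrt_mul _ _ (‖x 0‖) (‖x 1‖) (‖x 2‖)
end
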